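/- arXiv:1603.02323 — 2 statements merged into one kernel-verified Lean document; each statement's English description precedes it below -/
import Mathlib

section
/- (Clustering Lemma) Let k# ≥ 2 be given. There exists a constant c > 0 depending only on k# and n such that: for any finite set S ⊂ ℝⁿ with 2 ≤ #(S) ≤ k#, S can be partitioned into nonempty subsets S₀, S₁, ..., S_{ν_max} such that #(S_ν) < #(S) for each ν, and dist(S_ν, S_μ) ≥ c · diam(S) for all μ ≠ ν. -/
/-!
Fix `p ∈ S` and let `m` be the largest distance from `p` to a point of `S`, so `diam S ≤ 2m`.
The at most `k - 1` distances `|x - p|`, `x ≠ p`, cannot meet all `k` intervals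
`((j-1)m/k, jm/k]`, so some such interval contains none of them. Cutting `S` along this empty
annulus around `p` splits it into two nonempty clusters at distance `≥ m/k ≥ diam S / (2k)`.
-/

open Finset Metric

theorem exists_gap_of_card_lt {k : ℕ} {d : ℝ} (hd : 0 < d) (R : Finset ℝ) (hR : #R < k) :
    ∃ t, 0 ≤ t ∧ t + d / k ≤ d ∧ ∀ r ∈ R, r ≤ t ∨ t + d / k < r := by
  have hk : (0 : ℝ) < k := by exact_mod_cast hR.trans_le' (Nat.zero_le _)
  have hcard : #(R.image fun r => ⌈r * k / d⌉) < #(Icc (1 : ℤ) k) := by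
    rw [Int.card_Icc]
    exact card_image_le.trans_lt (by omega)
  -- no element of `R` lies in `((j-1)d/k, jd/k]`
  obtain ⟨j, hj, hjR⟩ := exists_mem_notMem_of_card_lt_card hcard
  obtain ⟨hj1, hjk⟩ := mem_Icc.mp hj
  have hj1' : (1 : ℝ) ≤ j := by exact_mod_cast hj1
  have hjk' : (j : ℝ) ≤ k := by exact_mod_cast hjk
  have hend : (j - 1) * d / k + d / k = j * d / k := by ring
  refine ⟨(j - 1) * d / k, by have := sub_nonneg.mpr hj1'; positivity, ?_, fun r hr => ?_⟩
  · rw [hend, div_le_iff₀ hk]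
    nlinarith
  · have hne : ⌈r * k / d⌉ ≠ j := fun h => hjR (mem_image.mpr ⟨r, hr, h⟩)
    rcases hne.lt_or_gt with hlt | hgt
    · have : r * k / d ≤ ((j - 1 : ℤ) : ℝ) := Int.ceil_le.mp (by omega)
      push_cast at this
      rw [div_le_iff₀ hd] at this
      exact Or.inl ((le_div_iff₀ hk).mpr (by linarith))
    · have : (j : ℝ) < r * k / d := Int.lt_ceil.mp hgt
      rw [lt_div_iff₀ hd] at this
      exact Or.inr (by rw [hend, div_lt_iff₀ hk]; linarith)

theorem Set.Finite.exists_separated_subset {X : Type*} [MetricSpace X] {S : Set X}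
    (hS : S.Finite) (hnt : S.Nontrivial) {k : ℕ} (hSk : S.ncard ≤ k) :
    ∃ A ⊆ S, A.Nonempty ∧ (S \ A).Nonempty ∧
      ∀ a ∈ A, ∀ b ∈ S \ A, (2 * k : ℝ)⁻¹ * diam S ≤ dist a b := by
  classical
  obtain ⟨p, hp, q, hq, hpq⟩ := hnt
  obtain ⟨x₀, hx₀, hx₀max⟩ := Set.exists_max_image S (dist · p) hS ⟨p, hp⟩
  set m := dist x₀ p
  have hm : 0 < m := (dist_pos.mpr hpq.symm).trans_le (hx₀max q hq)
  have hdiam : diam S ≤ 2 * m :=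
    diam_le_of_subset_closedBall hm.le fun x hx => mem_closedBall.mpr (hx₀max x hx)
  have hR : #((hS.toFinset.erase p).image (dist · p)) < k := by
    refine card_image_le.trans_lt ?_
    rw [card_erase_of_mem (hS.mem_toFinset.mpr hp), ← Set.ncard_eq_toFinset_card S hS]
    have := Set.one_lt_ncard_iff hS |>.mpr ⟨p, q, hp, hq, hpq⟩
    omega
  obtain ⟨t, ht0, htm, hgap⟩ := exists_gap_of_card_lt hm _ hR
  have hk : (0 : ℝ) < k := by exact_mod_cast hR.trans_le' (Nat.zero_le _)
  refine ⟨{x ∈ S | dist x p ≤ t}, fun x hx => hx.1, ⟨p, hp, by simpa using ht0⟩,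
    ⟨x₀, hx₀, fun h => ?_⟩, fun a ha b hb => ?_⟩
  · have : 0 < m / k := by positivity
    linarith [h.2]
  · have hbp : b ≠ p := by rintro rfl; exact hb.2 ⟨hb.1, by simpa using ht0⟩
    have hbR : dist b p ∈ (hS.toFinset.erase p).image (dist · p) :=
      Finset.mem_image_of_mem _ (mem_erase.mpr ⟨hbp, hS.mem_toFinset.mpr hb.1⟩)
    have hfar : t + m / k < dist b p := (hgap _ hbR).resolve_left fun h => hb.2 ⟨hb.1, h⟩
    calc (2 * k : ℝ)⁻¹ * diam S ≤ (2 * k : ℝ)⁻¹ * (2 * m) := by gcongr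
      _ = m / k := by field_simp
      _ ≤ dist a b := by linarith [dist_triangle b a p, dist_comm a b, ha.2]

/-- Clustering Lemma: given `k# ≥ 2`, there is a constant `c > 0` depending only
on `k#` and `n` such that any finite set `S ⊂ ℝⁿ` with `2 ≤ #(S) ≤ k#` can be
partitioned into nonempty subsets `S₀, …, S_{ν_max}`, each of cardinality
strictly less than `#(S)`, with `dist(S_ν, S_μ) ≥ c · diam(S)` for `μ ≠ ν`. -/
theorem clustering_lemma (n kSharp : ℕ) (hk : 2 ≤ kSharp) :
    ∃ c : ℝ, 0 < c ∧
      ∀ S : Set (EuclideanSpace ℝ (Fin n)), S.Finite → 2 ≤ S.ncard → S.ncard ≤ kSharp →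
        ∃ (νmax : ℕ) (T : Fin (νmax + 1) → Set (EuclideanSpace ℝ (Fin n))),
          (∀ ν, (T ν).Nonempty) ∧
          (∀ μ ν, μ ≠ ν → T μ ∩ T ν = ∅) ∧
          (⋃ ν, T ν) = S ∧
          (∀ ν, (T ν).ncard < S.ncard) ∧
          (∀ μ ν, μ ≠ ν → ∀ a ∈ T μ, ∀ b ∈ T ν, c * Metric.diam S ≤ dist a b) := by
  refine ⟨(2 * kSharp)⁻¹, by positivity, fun S hS hS2 hSk => ?_⟩
  obtain ⟨A, hAS, hA, hSA, hsep⟩ := hS.exists_separated_subset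
    (Set.one_lt_ncard_iff_nontrivial_and_finite.mp hS2).1 hSk
  refine ⟨1, ![A, S \ A], ?_, ?_, ?_, ?_, ?_⟩
  · intro ν
    fin_cases ν
    exacts [hA, hSA]
  · intro μ ν h
    fin_cases μ <;> fin_cases ν <;> simp_all
  · simp [Set.iUnion_fin_add_one_eq_iUnion_succ, Function.comp_def, hAS]
  · intro ν
    fin_cases ν
    · exact Set.ncard_lt_ncard ((Set.ssubset_iff_of_subset hAS).mpr hSA) hS
    · refine Set.ncard_lt_ncard (Set.sdiff_ssubset_left_iff.mpr ?_) hS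
      rwa [Set.inter_eq_right.mpr hAS]
  · intro μ ν h a ha b hb
    fin_cases μ <;> fin_cases ν
    · exact absurd rfl h
    · exact hsep a ha b hb
    · exact dist_comm b a ▸ hsep b hb a ha
    · exact absurd rfl h
end

section
/- Suppose Γ⃗ = (Γ(x,M))_{x∈E,M>0} is a (C_w, δ_max)-convex shape field. Fix x₀ ∈ E, M₀ > 0, 0 < δ ≤ δ_max, C₁ > 0, and P⁰, P̂, Ŝ ∈ P. Assume: P⁰ + (1/C₁)P̂ ∈ Γ(x₀, C₁M₀) and P⁰ − (1/C₁)P̂ ∈ Γ(x₀, C₁M₀); |∂^β P̂(x₀)| ≤ C₁M₀δ^{m−|β|} for |β| ≤ m−1; and |∂^β Ŝ(x₀)| ≤ C₁δ^{−|β|} for |β| ≤ m−1. Then there is a constant C₂ determined by C₁, C_w, m, n such that P⁰ + (1/C₂)(Ŝ⊙_{x₀}P̂) ∈ Γ(x₀, C₂M₀) and P⁰ − (1/C₂)(Ŝ⊙_{x₀}P̂) ∈ Γ(x₀, C₂M₀). -/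
noncomputable section

/-- Iterated partial derivative `∂^β` of a multivariate polynomial. -/
def pdiff {n : ℕ} (β : Fin n → ℕ) (P : MvPolynomial (Fin n) ℝ) :
    MvPolynomial (Fin n) ℝ :=
  (List.finRange n).foldr (fun i Q => (fun R => MvPolynomial.pderiv i R)^[β i] Q) P

/-- `∂^β P (x)`. -/
def pdEval {n : ℕ} (β : Fin n → ℕ) (P : MvPolynomial (Fin n) ℝ) (x : Fin n → ℝ) : ℝ :=
  MvPolynomial.eval x (pdiff β P)

/-- The multiindices of order `≤ m - 1` as a `Finset`. -/
def multiIdx (m n : ℕ) : Finset (Fin n → ℕ) :=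
  (Fintype.piFinset fun _ : Fin n => Finset.range m).filter fun α => (∑ i, α i) ≤ m - 1

/-- The `(m-1)`-st degree Taylor polynomial (jet) of `R` at `x`. -/
def jetAt (m : ℕ) {n : ℕ} (x : Fin n → ℝ) (R : MvPolynomial (Fin n) ℝ) :
    MvPolynomial (Fin n) ℝ :=
  ∑ α ∈ multiIdx m n,
    MvPolynomial.C (pdEval α R x / ((∏ i, Nat.factorial (α i) : ℕ) : ℝ)) *
      ∏ i, (MvPolynomial.X i - MvPolynomial.C (x i)) ^ α i

/-- Multiplication of jets at `x`: `P ⊙ₓ Q = J_x (P Q)`. -/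
def odot (m : ℕ) {n : ℕ} (x : Fin n → ℝ) (P Q : MvPolynomial (Fin n) ℝ) :
    MvPolynomial (Fin n) ℝ :=
  jetAt m x (P * Q)

/-- `Γ` is a shape field on `E`: each `Γ(x,M)` is a convex set of polynomials of
degree `≤ m-1`, monotone in `M`. -/
def ShapeField (m n : ℕ) (E : Set (Fin n → ℝ))
    (Γ : (Fin n → ℝ) → ℝ → Set (MvPolynomial (Fin n) ℝ)) : Prop :=
  ∀ x ∈ E, ∀ M : ℝ, 0 < M → Convex ℝ (Γ x M) ∧ (∀ P ∈ Γ x M, P.totalDegree ≤ m - 1) ∧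
    ∀ M' : ℝ, 0 < M' → M' ≤ M → Γ x M' ⊆ Γ x M

/-- `(C_w, δ_max)`-convexity of a shape field. -/
def WConvex (m n : ℕ) (E : Set (Fin n → ℝ))
    (Γ : (Fin n → ℝ) → ℝ → Set (MvPolynomial (Fin n) ℝ)) (Cw δmax : ℝ) : Prop :=
  ∀ δ : ℝ, 0 < δ → δ ≤ δmax → ∀ x ∈ E, ∀ M : ℝ, 0 < M →
    ∀ P₁ P₂ Q₁ Q₂ : MvPolynomial (Fin n) ℝ,
      P₁ ∈ Γ x M → P₂ ∈ Γ x M →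
      (∀ β : Fin n → ℕ, (∑ i, β i) ≤ m - 1 →
        |pdEval β (P₁ - P₂) x| ≤ M * δ ^ (m - ∑ i, β i)) →
      (∀ β : Fin n → ℕ, (∑ i, β i) ≤ m - 1 →
        |pdEval β Q₁ x| ≤ δ ^ (-(∑ i, (β i : ℤ))) ∧
        |pdEval β Q₂ x| ≤ δ ^ (-(∑ i, (β i : ℤ)))) →
      odot m x Q₁ Q₁ + odot m x Q₂ Q₂ = 1 →
      odot m x (odot m x Q₁ Q₁) P₁ + odot m x (odot m x Q₂ Q₂) P₂ ∈ Γ x (Cw * M)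

/-!
Let `s` be the jet of `Ŝ` at `x₀`. For `|w|` small the jets `(1 ± w s) / 2` have constant term
near `1 / 2`, so they are squares of jets `Q₊`, `Q₋`: with `c` the constant term and `v` the
rest, take `√c · √(1 + v / c)`, the square root being the binomial series truncated at order
`m`. The derivative bounds that `(C_w, δ)`-convexity asks of `Q±` come from the `δ`-weighted
`ℓ¹` norm `∑ |coeff d p| δ ^ |d|` of the Taylor coefficients, which is submultiplicative.
Since `Q₊ ⊙ Q₊ + Q₋ ⊙ Q₋ = 1` and `Q₊ ⊙ Q₊ - Q₋ ⊙ Q₋ = w s`, the combination of `P⁰ ± P̂ / C₁`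
that convexity provides is `P⁰ + (w / C₁) Ŝ ⊙ P̂`; take `w = ± C₁ / C₂`.
-/

open Finset

namespace Polynomial

def truncSqrtOneAdd (m : ℕ) : ℝ[X] := ∑ k ∈ range m, C (Ring.choose (1 / 2 : ℝ) k) * X ^ k

lemma X_pow_dvd_truncSqrtOneAdd_sq_sub (m : ℕ) : X ^ m ∣ truncSqrtOneAdd m ^ 2 - (1 + X) := by
  have hcoeff (k : ℕ) :
      (truncSqrtOneAdd m).coeff k = if k < m then Ring.choose (1 / 2 : ℝ) k else 0 := by
    simp [truncSqrtOneAdd, finsetSum_coeff]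
  rw [X_pow_dvd_iff]
  intro d hd
  -- Chu–Vandermonde: the coefficients of `√(1 + X) ^ 2` are `choose (1/2 + 1/2) d`.
  have hsq : (truncSqrtOneAdd m ^ 2).coeff d = Ring.choose (1 : ℝ) d := by
    rw [sq, coeff_mul, show (1 : ℝ) = 1 / 2 + 1 / 2 by norm_num,
      Ring.add_choose_eq _ (Commute.refl _)]
    refine sum_congr rfl fun ij hij => ?_
    have := mem_antidiagonal.mp hij
    rw [hcoeff, hcoeff, if_pos (by omega), if_pos (by omega)]
  rw [coeff_sub, hsq, ← Nat.cast_one, Ring.choose_natCast]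
  rcases d with _ | _ | d <;> simp [coeff_one, coeff_X, Nat.choose_eq_zero_of_lt]

end Polynomial

open MvPolynomial

namespace MvPolynomial

section Taylor

variable {σ R : Type*} [CommRing R]

def taylor (x : σ → R) : MvPolynomial σ R →ₐ[R] MvPolynomial σ R :=
  aeval fun i => X i + C (x i)

@[simp]
lemma taylor_X (x : σ → R) (i : σ) : taylor x (X i) = X i + C (x i) := aeval_X _ _

lemma taylor_comp_taylor (x y : σ → R) : (taylor x).comp (taylor y) = taylor (x + y) := by
  ext i
  simp [add_assoc]

lemma taylor_taylor (x y : σ → R) (p : MvPolynomial σ R) :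
    taylor x (taylor y p) = taylor (x + y) p :=
  AlgHom.congr_fun (taylor_comp_taylor x y) p

@[simp]
lemma taylor_zero : taylor (0 : σ → R) = AlgHom.id R _ := by
  ext i
  simp

@[simp]
lemma taylor_neg_taylor (x : σ → R) (p : MvPolynomial σ R) : taylor (-x) (taylor x p) = p := by
  simp [taylor_taylor]

@[simp]
lemma taylor_taylor_neg (x : σ → R) (p : MvPolynomial σ R) : taylor x (taylor (-x) p) = p := by
  simp [taylor_taylor]

lemma eval_taylor (x z : σ → R) (p : MvPolynomial σ R) :
    eval z (taylor x p) = eval (z + x) p := by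
  induction p using MvPolynomial.induction_on with
  | C a => simp [taylor]
  | add p q hp hq => simp [hp, hq]
  | mul_X p i hp => simp [hp]

lemma pderiv_taylor (x : σ → R) (i : σ) (p : MvPolynomial σ R) :
    pderiv i (taylor x p) = taylor x (pderiv i p) := by
  induction p using MvPolynomial.induction_on with
  | C a => simp [taylor]
  | add p q hp hq => simp [hp, hq]
  | mul_X p j hp =>
    rcases eq_or_ne i j with rfl | h
    · simp [hp]
    · simp [hp, pderiv_X_of_ne h.symm]

lemma totalDegree_taylor_le (x : σ → R) (p : MvPolynomial σ R) :
    (taylor x p).totalDegree ≤ p.totalDegree := by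
  conv_lhs => rw [p.as_sum, map_sum]
  refine (totalDegree_finsetSum _ _).trans (Finset.sup_le fun d hd => ?_)
  refine le_trans ?_ (le_totalDegree hd)
  rw [taylor, aeval_monomial, algebraMap_eq, Finsupp.prod]
  refine (totalDegree_mul _ _).trans ?_
  rw [totalDegree_C, zero_add]
  refine (totalDegree_finsetProd _ _).trans (Finset.sum_le_sum fun i _ => ?_)
  refine (totalDegree_pow _ _).trans (mul_le_of_le_one_right (Nat.zero_le _) ?_)
  refine (totalDegree_add _ _).trans ?_
  rw [totalDegree_C, max_eq_left (Nat.zero_le _)]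
  exact (totalDegree_monomial_le _ _).trans (by simp)

end Taylor

section Truncation

variable {σ R : Type*} [CommRing R] {m : ℕ}

lemma mem_idealOfVars_of_constantCoeff_eq_zero {v : MvPolynomial σ R}
    (hv : constantCoeff v = 0) : v ∈ idealOfVars σ R := by
  rw [← pow_one (idealOfVars σ R), mem_pow_idealOfVars_iff']
  intro d hd
  rwa [(Finsupp.degree_eq_zero_iff d).mp (Nat.lt_one_iff.mp hd), ← constantCoeff_eq]

variable [Finite σ]

open MvPowerSeries in
lemma truncTotal_coe_eq_truncTotal_coe_iff {u v : MvPolynomial σ R} :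
    truncTotal m (u : MvPowerSeries σ R) = truncTotal m (v : MvPowerSeries σ R) ↔
      u - v ∈ idealOfVars σ R ^ m := by
  simp only [mem_pow_idealOfVars_iff', MvPolynomial.ext_iff, coeff_truncTotal_eq_ite,
    coeff_coe, coeff_sub, sub_eq_zero]
  refine ⟨fun h d hd => by simpa [hd] using h d, fun h d => ?_⟩
  split_ifs with hd
  exacts [h d hd, rfl]

lemma truncTotal_coe_sub_mem (u : MvPolynomial σ R) :
    MvPowerSeries.truncTotal m (u : MvPowerSeries σ R) - u ∈ idealOfVars σ R ^ m := by
  rw [mem_pow_idealOfVars_iff']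
  intro d hd
  rw [coeff_sub, MvPowerSeries.coeff_truncTotal _ hd, coeff_coe, sub_self]

end Truncation

section WeightedNorm

variable {σ : Type*} {δ : ℝ}

def weightedNorm (δ : ℝ) (p : MvPolynomial σ ℝ) : ℝ :=
  ∑ d ∈ p.support, |coeff d p| * δ ^ d.degree

lemma weightedNorm_eq_sum_of_support_subset {p : MvPolynomial σ ℝ} {s : Finset (σ →₀ ℕ)}
    (h : p.support ⊆ s) : weightedNorm δ p = ∑ d ∈ s, |coeff d p| * δ ^ d.degree :=
  sum_subset h fun d _ hd => by simp [notMem_support_iff.mp hd]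

lemma weightedNorm_monomial (d : σ →₀ ℕ) (a : ℝ) :
    weightedNorm δ (monomial d a) = |a| * δ ^ d.degree := by
  classical
  rw [weightedNorm_eq_sum_of_support_subset support_monomial_subset, sum_singleton,
    coeff_monomial, if_pos rfl]

lemma weightedNorm_C (a : ℝ) : weightedNorm δ (C a : MvPolynomial σ ℝ) = |a| := by
  simpa using weightedNorm_monomial (σ := σ) (δ := δ) 0 a

lemma weightedNorm_smul (c : ℝ) (p : MvPolynomial σ ℝ) :
    weightedNorm δ (c • p) = |c| * weightedNorm δ p := by
  rw [weightedNorm_eq_sum_of_support_subset support_smul, weightedNorm, mul_sum]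
  simp [abs_mul, mul_assoc]

variable (hδ : 0 ≤ δ)
include hδ

lemma weightedNorm_nonneg (p : MvPolynomial σ ℝ) : 0 ≤ weightedNorm δ p :=
  sum_nonneg fun _ _ => by positivity

lemma abs_coeff_mul_pow_le_weightedNorm (p : MvPolynomial σ ℝ) (d : σ →₀ ℕ) :
    |coeff d p| * δ ^ d.degree ≤ weightedNorm δ p := by
  classical
  rw [weightedNorm_eq_sum_of_support_subset (subset_insert d p.support)]
  exact single_le_sum (f := fun d => |coeff d p| * δ ^ d.degree) (fun _ _ => by positivity)
    (mem_insert_self _ _)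

lemma weightedNorm_add_le (p q : MvPolynomial σ ℝ) :
    weightedNorm δ (p + q) ≤ weightedNorm δ p + weightedNorm δ q := by
  classical
  rw [weightedNorm_eq_sum_of_support_subset support_add,
    weightedNorm_eq_sum_of_support_subset subset_union_left,
    weightedNorm_eq_sum_of_support_subset subset_union_right, ← sum_add_distrib]
  gcongr with d
  rw [coeff_add, ← add_mul]
  gcongr
  exact abs_add_le _ _

lemma weightedNorm_sum_le {ι : Type*} (s : Finset ι) (f : ι → MvPolynomial σ ℝ) :
    weightedNorm δ (∑ i ∈ s, f i) ≤ ∑ i ∈ s, weightedNorm δ (f i) :=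
  le_sum_of_subadditive _ (by simp [weightedNorm]) (weightedNorm_add_le hδ) s f

lemma weightedNorm_mul_le (p q : MvPolynomial σ ℝ) :
    weightedNorm δ (p * q) ≤ weightedNorm δ p * weightedNorm δ q := by
  calc weightedNorm δ (p * q)
      ≤ ∑ a ∈ p.support, ∑ b ∈ q.support,
          weightedNorm δ (monomial a (coeff a p) * monomial b (coeff b q)) := by
        conv_lhs => rw [p.as_sum, q.as_sum, sum_mul_sum]
        exact (weightedNorm_sum_le hδ _ _).trans
          (sum_le_sum fun a _ => weightedNorm_sum_le hδ _ _)
    _ = weightedNorm δ p * weightedNorm δ q := by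
        rw [weightedNorm, weightedNorm, sum_mul_sum]
        refine sum_congr rfl fun a _ => sum_congr rfl fun b _ => ?_
        rw [monomial_mul, weightedNorm_monomial, abs_mul, map_add, pow_add]
        ring

lemma weightedNorm_pow_le (p : MvPolynomial σ ℝ) (k : ℕ) :
    weightedNorm δ (p ^ k) ≤ weightedNorm δ p ^ k := by
  induction k with
  | zero => simpa using (weightedNorm_C (σ := σ) (δ := δ) 1).le
  | succ k ih =>
    rw [pow_succ, pow_succ]
    exact (weightedNorm_mul_le hδ _ _).trans
      (mul_le_mul_of_nonneg_right ih (weightedNorm_nonneg hδ p))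

end WeightedNorm

section JetSqrt

variable {σ : Type*}

def jetSqrt (m : ℕ) (c : ℝ) (v : MvPolynomial σ ℝ) : MvPolynomial σ ℝ :=
  √c • Polynomial.aeval (c⁻¹ • v) (Polynomial.truncSqrtOneAdd m)

lemma aeval_truncSqrtOneAdd (m : ℕ) (v : MvPolynomial σ ℝ) :
    Polynomial.aeval v (Polynomial.truncSqrtOneAdd m)
      = ∑ k ∈ range m, Ring.choose (1 / 2 : ℝ) k • v ^ k := by
  simp [Polynomial.truncSqrtOneAdd, Algebra.smul_def]

variable {m : ℕ} {c δ : ℝ} {v : MvPolynomial σ ℝ}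

lemma jetSqrt_sq_sub_mem (hc : 0 < c) (hv : constantCoeff v = 0) :
    jetSqrt m c v ^ 2 - (C c + v) ∈ idealOfVars σ ℝ ^ m := by
  obtain ⟨r, hr⟩ := Polynomial.X_pow_dvd_truncSqrtOneAdd_sq_sub m
  have hv' : constantCoeff (c⁻¹ • v) = 0 := by simp [hv]
  have key : jetSqrt m c v ^ 2 - (C c + v)
      = C c * ((c⁻¹ • v) ^ m * Polynomial.aeval (c⁻¹ • v) r) := by
    have h := congrArg (Polynomial.aeval (c⁻¹ • v)) (sub_eq_iff_eq_add.mp hr)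
    simp only [map_add, map_mul, map_pow, map_one, Polynomial.aeval_X] at h
    have hcc : C c * C c⁻¹ = (1 : MvPolynomial σ ℝ) := by
      rw [← map_mul, mul_inv_cancel₀ hc.ne', map_one]
    rw [jetSqrt, smul_pow, h, Real.sq_sqrt hc.le, smul_eq_C_mul, smul_eq_C_mul]
    linear_combination v * hcc
  rw [key]
  exact Ideal.mul_mem_left _ _ (Ideal.mul_mem_right _ _
    (Ideal.pow_mem_pow (mem_idealOfVars_of_constantCoeff_eq_zero hv') m))

lemma constantCoeff_jetSqrt (hm : 0 < m) (hv : constantCoeff v = 0) :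
    constantCoeff (jetSqrt m c v) = √c := by
  obtain ⟨m, rfl⟩ := Nat.exists_eq_add_one_of_ne_zero hm.ne'
  simp [jetSqrt, aeval_truncSqrtOneAdd, sum_range_succ', hv]

lemma weightedNorm_jetSqrt_sub_le (hm : 0 < m) (hδ : 0 ≤ δ) (hc : 0 < c) (hc1 : c ≤ 1)
    (hvc : weightedNorm δ v ≤ c) :
    weightedNorm δ (jetSqrt m c v - C √c)
      ≤ (∑ k ∈ range m, |Ring.choose (1 / 2 : ℝ) k|) * (weightedNorm δ v / c) := by
  obtain ⟨m, rfl⟩ := Nat.exists_eq_add_one_of_ne_zero hm.ne'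
  set ρ := weightedNorm δ v / c
  have hρ : weightedNorm δ (c⁻¹ • v) = ρ := by
    rw [weightedNorm_smul, abs_of_pos (inv_pos.mpr hc), inv_mul_eq_div]
  have hρ1 : ρ ≤ 1 := div_le_one_of_le₀ hvc hc.le
  have hρ0 : 0 ≤ ρ := div_nonneg (weightedNorm_nonneg hδ v) hc.le
  have hsqrt : √c ≤ 1 := Real.sqrt_le_one.mpr hc1
  have hdiff : jetSqrt (m + 1) c v - C √c
      = √c • ∑ k ∈ range m, Ring.choose (1 / 2 : ℝ) (k + 1) • (c⁻¹ • v) ^ (k + 1) := by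
    simp [jetSqrt, aeval_truncSqrtOneAdd, sum_range_succ', smul_add, smul_eq_C_mul]
  rw [hdiff, weightedNorm_smul, abs_of_nonneg (Real.sqrt_nonneg c), sum_range_succ', add_mul]
  calc √c * weightedNorm δ
          (∑ k ∈ range m, Ring.choose (1 / 2 : ℝ) (k + 1) • (c⁻¹ • v) ^ (k + 1))
      ≤ 1 * ∑ k ∈ range m, |Ring.choose (1 / 2 : ℝ) (k + 1)| * ρ := by
        gcongr
        · exact weightedNorm_nonneg hδ _
        refine (weightedNorm_sum_le hδ _ _).trans (sum_le_sum fun k _ => ?_)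
        rw [weightedNorm_smul]
        gcongr
        calc weightedNorm δ ((c⁻¹ • v) ^ (k + 1)) ≤ ρ ^ (k + 1) :=
              hρ ▸ weightedNorm_pow_le hδ _ _
          _ ≤ ρ := pow_le_of_le_one hρ0 hρ1 k.succ_ne_zero
    _ ≤ _ := by
        rw [one_mul, sum_mul]
        have : 0 ≤ |Ring.choose (1 / 2 : ℝ) 0| * ρ := by positivity
        linarith

lemma exists_jetSqrt_half_one_add_smul (hm : 0 < m) (hδ : 0 ≤ δ) {S : MvPolynomial σ ℝ}
    {w : ℝ} (hw : 4 * (|w| * weightedNorm δ S) ≤ 1) :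
    ∃ q : MvPolynomial σ ℝ, q ^ 2 - (2⁻¹ : ℝ) • (1 + w • S) ∈ idealOfVars σ ℝ ^ m ∧
      |constantCoeff q| ≤ 1 ∧
      weightedNorm δ (q - C (constantCoeff q))
        ≤ 4 * (∑ k ∈ range m, |Ring.choose (1 / 2 : ℝ) k|) * (|w| * weightedNorm δ S) := by
  set s₀ := constantCoeff S
  set c := 2⁻¹ + w / 2 * s₀ with hc_def
  set v := (w / 2) • (S - C s₀)
  have hs₀ : |s₀| ≤ weightedNorm δ S := by
    have h := abs_coeff_mul_pow_le_weightedNorm hδ S 0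
    rwa [map_zero, pow_zero, mul_one, ← constantCoeff_eq] at h
  have hws₀ : |w * s₀| ≤ 4⁻¹ := by
    rw [abs_mul]
    nlinarith [abs_nonneg w, abs_nonneg s₀]
  have hc : 4⁻¹ ≤ c ∧ c ≤ 1 := by
    constructor <;> linarith [(abs_le.mp hws₀).1, (abs_le.mp hws₀).2]
  have hv0 : constantCoeff v = 0 := by simp [v, s₀]
  have hv : weightedNorm δ v ≤ |w| * weightedNorm δ S := by
    have h := weightedNorm_add_le hδ S (C (-s₀))
    rw [weightedNorm_C, abs_neg, map_neg, ← sub_eq_add_neg] at h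
    rw [weightedNorm_smul, abs_div, abs_two]
    nlinarith [abs_nonneg w]
  refine ⟨jetSqrt m c v, ?_, ?_, ?_⟩
  · convert jetSqrt_sq_sub_mem (m := m) (c := c) (by linarith) hv0 using 2
    simp only [v, c, C_eq_smul_one]
    module
  · rw [constantCoeff_jetSqrt hm hv0, abs_of_nonneg (Real.sqrt_nonneg c)]
    exact Real.sqrt_le_one.mpr hc.2
  · rw [constantCoeff_jetSqrt hm hv0]
    refine (weightedNorm_jetSqrt_sub_le (c := c) (v := v) hm hδ (by linarith) hc.2
      (by linarith)).trans ?_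
    rw [mul_assoc 4, mul_left_comm 4]
    gcongr
    rw [div_le_iff₀ (by linarith)]
    nlinarith [mul_nonneg (abs_nonneg w) (weightedNorm_nonneg hδ S)]

end JetSqrt

end MvPolynomial

section PartialDerivatives

variable {n : ℕ}

lemma pdiff_add (β : Fin n → ℕ) (p q : MvPolynomial (Fin n) ℝ) :
    pdiff β (p + q) = pdiff β p + pdiff β q := by
  unfold pdiff
  induction List.finRange n with
  | nil => rfl
  | cons i l ih =>
    simp only [List.foldr_cons, ih]
    exact iterate_map_add (pderiv i) _ _ _

lemma pdiff_taylor (β : Fin n → ℕ) (x : Fin n → ℝ) (p : MvPolynomial (Fin n) ℝ) :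
    pdiff β (taylor x p) = taylor x (pdiff β p) := by
  unfold pdiff
  induction List.finRange n with
  | nil => rfl
  | cons i l ih =>
    simp only [List.foldr_cons, ih]
    exact Function.Commute.iterate_left (f := pderiv i) (pderiv_taylor x i) _ _

lemma iterate_pderiv_monomial (i : Fin n) (k : ℕ) (d : Fin n →₀ ℕ) (c : ℝ) :
    (⇑(pderiv i))^[k] (monomial d c)
      = monomial (d - Finsupp.single i k) (c * (d i).descFactorial k) := by
  induction k with
  | zero => simp
  | succ k ih =>
    rw [Function.iterate_succ_apply', ih, pderiv_monomial, tsub_tsub, ← Finsupp.single_add,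
      Finsupp.tsub_apply, Finsupp.single_eq_same, Nat.descFactorial_succ]
    congr 1
    push_cast
    ring

lemma foldr_pderiv_monomial (β : Fin n → ℕ) (l : List (Fin n)) (hl : l.Nodup)
    (d : Fin n →₀ ℕ) (c : ℝ) :
    l.foldr (fun i Q => (fun R => pderiv i R)^[β i] Q) (monomial d c)
      = monomial (d - ∑ i ∈ l.toFinset, Finsupp.single i (β i))
          (c * ∏ i ∈ l.toFinset, ((d i).descFactorial (β i) : ℝ)) := by
  induction l with
  | nil => simp
  | cons i l ih =>
    obtain ⟨hi, hl⟩ := List.nodup_cons.mp hl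
    have hi' : i ∉ l.toFinset := by simpa using hi
    have hdi : (d - ∑ j ∈ l.toFinset, Finsupp.single j (β j)) i = d i := by
      simp [Finsupp.single_apply, hi']
    rw [List.foldr_cons, ih hl, iterate_pderiv_monomial, hdi, List.toFinset_cons,
      sum_insert hi', prod_insert hi', tsub_tsub, add_comm, mul_assoc,
      mul_comm (∏ j ∈ l.toFinset, _)]

lemma pdiff_monomial (β : Fin n → ℕ) (d : Fin n →₀ ℕ) (c : ℝ) :
    pdiff β (monomial d c)
      = monomial (d - Finsupp.equivFunOnFinite.symm β)
          (c * ∏ i, ((d i).descFactorial (β i) : ℝ)) := by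
  rw [pdiff, foldr_pderiv_monomial β _ (List.nodup_finRange n), List.toFinset_finRange]
  congr
  ext i
  simp [Finsupp.finsetSum_apply, Finsupp.single_apply]

lemma eval_zero_pdiff (β : Fin n → ℕ) (u : MvPolynomial (Fin n) ℝ) :
    eval 0 (pdiff β u)
      = (∏ i, ((β i).factorial : ℝ)) * coeff (Finsupp.equivFunOnFinite.symm β) u := by
  induction u using MvPolynomial.induction_on' with
  | monomial d c =>
    rw [pdiff_monomial, eval_zero, constantCoeff_monomial, coeff_monomial]
    by_cases hd : d = Finsupp.equivFunOnFinite.symm β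
    · subst hd
      simp [Nat.descFactorial_self, mul_comm]
    by_cases hle : d - Finsupp.equivFunOnFinite.symm β = 0
    · obtain ⟨i, hi⟩ : ∃ i, d i < β i := by
        by_contra! h
        exact hd (le_antisymm (tsub_eq_zero_iff_le.mp hle) fun i => h i)
      have : ∏ j, ((d j).descFactorial (β j) : ℝ) = 0 :=
        prod_eq_zero (mem_univ i) (by simp [Nat.descFactorial_eq_zero_iff_lt.mpr hi])
      simp [hd, this]
    · simp [hd, hle]
  | add p q hp hq => rw [pdiff_add, map_add, hp, hq, coeff_add, mul_add]

lemma pdEval_eq (β : Fin n → ℕ) (p : MvPolynomial (Fin n) ℝ) (x : Fin n → ℝ) :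
    pdEval β p x = (∏ i, ((β i).factorial : ℝ))
      * coeff (Finsupp.equivFunOnFinite.symm β) (taylor x p) := by
  rw [← eval_zero_pdiff, pdiff_taylor, eval_taylor, zero_add, pdEval]

lemma pdEval_smul (β : Fin n → ℕ) (c : ℝ) (p : MvPolynomial (Fin n) ℝ) (x : Fin n → ℝ) :
    pdEval β (c • p) x = c * pdEval β p x := by
  rw [pdEval_eq, pdEval_eq, map_smul, coeff_smul, smul_eq_mul, mul_left_comm]

lemma abs_pdEval_le_iff {δ : ℝ} (hδ : 0 < δ) (β : Fin n → ℕ) (P : MvPolynomial (Fin n) ℝ)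
    (x : Fin n → ℝ) (K : ℝ) :
    |pdEval β P x| ≤ K * δ ^ (-(∑ i, (β i : ℤ))) ↔
      (∏ i, ((β i).factorial : ℝ)) * |coeff (Finsupp.equivFunOnFinite.symm β) (taylor x P)|
        * δ ^ (Finsupp.equivFunOnFinite.symm β).degree ≤ K := by
  rw [pdEval_eq, abs_mul, abs_of_pos (by positivity), Finsupp.degree_eq_sum,
    Finsupp.coe_equivFunOnFinite_symm, zpow_neg, ← Nat.cast_sum, zpow_natCast,
    ← div_eq_mul_inv, le_div_iff₀ (by positivity)]

end PartialDerivatives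

section Jets

variable {n m : ℕ}

lemma mem_multiIdx_iff (hm : 0 < m) (α : Fin n → ℕ) :
    α ∈ multiIdx m n ↔ (Finsupp.equivFunOnFinite.symm α).degree < m := by
  rw [Finsupp.degree_eq_sum, multiIdx, mem_filter, Fintype.mem_piFinset]
  simp only [Finsupp.coe_equivFunOnFinite_symm, mem_range]
  refine ⟨fun h => by omega, fun h => ⟨fun i => ?_, by omega⟩⟩
  exact (single_le_sum (fun j _ => Nat.zero_le (α j)) (mem_univ i)).trans_lt h

/-- The class of `P` in the ring of `m`-jets at `x`, `ℝ[X] ⧸ (X₁, …, Xₙ) ^ m` after centring at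
`x`; `odot m x` is multiplication in this ring. -/
def jetClass (m : ℕ) (x : Fin n → ℝ) :
    MvPolynomial (Fin n) ℝ →ₐ[ℝ] MvPolynomial (Fin n) ℝ ⧸ idealOfVars (Fin n) ℝ ^ m :=
  (Ideal.Quotient.mkₐ ℝ _).comp (taylor x)

lemma jetClass_taylor_neg (x : Fin n → ℝ) (q : MvPolynomial (Fin n) ℝ) :
    jetClass m x (taylor (-x) q) = Ideal.Quotient.mkₐ ℝ _ q := by
  simp [jetClass]

lemma jetClass_eq_mkₐ_truncTotal (x : Fin n → ℝ) (P : MvPolynomial (Fin n) ℝ) :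
    jetClass m x P = Ideal.Quotient.mkₐ ℝ _
      (MvPowerSeries.truncTotal m (taylor x P : MvPowerSeries (Fin n) ℝ)) := by
  rw [jetClass, AlgHom.comp_apply, Ideal.Quotient.mkₐ_eq_mk]
  exact (Ideal.Quotient.eq.mpr (truncTotal_coe_sub_mem _)).symm

lemma jetClass_taylor_neg_sq {x : Fin n → ℝ} {S q : MvPolynomial (Fin n) ℝ} {w : ℝ}
    (hq : q ^ 2 - (2⁻¹ : ℝ) • (1 + w • MvPowerSeries.truncTotal m
      (taylor x S : MvPowerSeries (Fin n) ℝ)) ∈ idealOfVars (Fin n) ℝ ^ m) :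
    jetClass m x (taylor (-x) q) ^ 2 = (2⁻¹ : ℝ) • (1 + w • jetClass m x S) := by
  rw [jetClass_taylor_neg, jetClass_eq_mkₐ_truncTotal, ← map_pow,
    ← map_one (Ideal.Quotient.mkₐ ℝ _), ← map_smul, ← map_add, ← map_smul,
    Ideal.Quotient.mkₐ_eq_mk]
  exact Ideal.Quotient.eq.mpr hq

variable (hm : 0 < m) (x : Fin n → ℝ)
include hm

lemma jetAt_eq_taylor_truncTotal (R : MvPolynomial (Fin n) ℝ) :
    jetAt m x R =
      taylor (-x) (MvPowerSeries.truncTotal m (taylor x R : MvPowerSeries (Fin n) ℝ)) := by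
  rw [jetAt, MvPowerSeries.truncTotal, MvPowerSeries.truncFinset_apply, map_sum]
  refine sum_equiv Finsupp.equivFunOnFinite.symm (fun α => ?_) fun α _ => ?_
  · rw [mem_multiIdx_iff hm, Set.Finite.mem_toFinset, Set.mem_ofPred_eq]
  · rw [taylor, aeval_monomial, Finsupp.prod_fintype _ _ fun i => pow_zero _, pdEval_eq,
      coeff_coe, Nat.cast_prod, mul_div_cancel_left₀ _ (by positivity), algebraMap_eq]
    simp [sub_eq_add_neg]

lemma jetAt_eq_jetAt_iff {P Q : MvPolynomial (Fin n) ℝ} :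
    jetAt m x P = jetAt m x Q ↔ jetClass m x P = jetClass m x Q := by
  rw [jetAt_eq_taylor_truncTotal hm, jetAt_eq_taylor_truncTotal hm,
    (Function.LeftInverse.injective (taylor_taylor_neg x)).eq_iff,
    truncTotal_coe_eq_truncTotal_coe_iff]
  exact Ideal.Quotient.eq.symm

lemma jetClass_jetAt (P : MvPolynomial (Fin n) ℝ) :
    jetClass m x (jetAt m x P) = jetClass m x P := by
  rw [jetAt_eq_taylor_truncTotal hm, jetClass_taylor_neg, jetClass_eq_mkₐ_truncTotal]

lemma jetAt_add (P Q : MvPolynomial (Fin n) ℝ) :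
    jetAt m x (P + Q) = jetAt m x P + jetAt m x Q := by
  simp only [jetAt_eq_taylor_truncTotal hm, map_add, MvPolynomial.coe_add]

lemma jetAt_smul (c : ℝ) (P : MvPolynomial (Fin n) ℝ) : jetAt m x (c • P) = c • jetAt m x P := by
  simp only [jetAt_eq_taylor_truncTotal hm, map_smul, MvPolynomial.coe_smul]

lemma jetAt_eq_self {P : MvPolynomial (Fin n) ℝ} (hP : P.totalDegree ≤ m - 1) :
    jetAt m x P = P := by
  rw [jetAt_eq_taylor_truncTotal hm, (MvPowerSeries.truncTotal_coe_eq_self_iff _ hm.ne').2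
    ((totalDegree_taylor_le x P).trans_lt (by omega)), taylor_neg_taylor]

lemma odot_self_add_odot_self_eq_one {Q₁ Q₂ : MvPolynomial (Fin n) ℝ}
    (h : jetClass m x Q₁ ^ 2 + jetClass m x Q₂ ^ 2 = 1) :
    odot m x Q₁ Q₁ + odot m x Q₂ Q₂ = 1 := by
  rw [odot, odot, ← jetAt_add hm, ← jetAt_eq_self hm x (P := 1) (by simp), jetAt_eq_jetAt_iff hm]
  simpa [sq] using h

lemma odot_odot_add_odot_odot {P₀ Phat S Q₁ Q₂ : MvPolynomial (Fin n) ℝ} {c w : ℝ}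
    (h₁ : (P₀ + c • Phat).totalDegree ≤ m - 1) (h₂ : (P₀ - c • Phat).totalDegree ≤ m - 1)
    (hsum : jetClass m x Q₁ ^ 2 + jetClass m x Q₂ ^ 2 = 1)
    (hdiff : jetClass m x Q₁ ^ 2 - jetClass m x Q₂ ^ 2 = w • jetClass m x S) :
    odot m x (odot m x Q₁ Q₁) (P₀ + c • Phat) + odot m x (odot m x Q₂ Q₂) (P₀ - c • Phat)
      = P₀ + (c * w) • odot m x S Phat := by
  have hP₀ : jetAt m x P₀ = P₀ := by
    have : P₀ = (1 / 2 : ℝ) • ((P₀ + c • Phat) + (P₀ - c • Phat)) := by module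
    rw [this, jetAt_smul hm, jetAt_add hm, jetAt_eq_self hm x h₁, jetAt_eq_self hm x h₂]
  calc _ = jetAt m x (jetAt m x (Q₁ * Q₁) * (P₀ + c • Phat)
              + jetAt m x (Q₂ * Q₂) * (P₀ - c • Phat)) := (jetAt_add hm x _ _).symm
    _ = jetAt m x (P₀ + (c * w) • (S * Phat)) := by
      rw [jetAt_eq_jetAt_iff hm]
      rw [← map_smul, smul_eq_C_mul, map_mul] at hdiff
      simp only [smul_eq_C_mul, map_add, map_sub, map_mul, jetClass_jetAt hm]
      linear_combination jetClass m x P₀ * hsum + jetClass m x (C c) * jetClass m x Phat * hdiff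
    _ = _ := by rw [jetAt_add hm, jetAt_smul hm, hP₀, odot]

end Jets

section Partition

variable {n m : ℕ} {δ : ℝ}

lemma weightedNorm_truncTotal_taylor_le (hδ : 0 < δ) {x : Fin n → ℝ}
    {S : MvPolynomial (Fin n) ℝ} {C₁ : ℝ} (hS : ∀ β : Fin n → ℕ, (∑ i, β i) ≤ m - 1 →
      |pdEval β S x| ≤ C₁ * δ ^ (-(∑ i, (β i : ℤ)))) :
    weightedNorm δ (MvPowerSeries.truncTotal m (taylor x S : MvPowerSeries (Fin n) ℝ))
      ≤ (Finsupp.finite_of_degree_lt (σ := Fin n) m).toFinset.card * C₁ := by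
  rw [weightedNorm_eq_sum_of_support_subset (s := (Finsupp.finite_of_degree_lt m).toFinset)]
  · rw [← nsmul_eq_mul]
    refine sum_le_card_nsmul _ _ _ fun d hd => ?_
    rw [Set.Finite.mem_toFinset, Set.mem_ofPred_eq] at hd
    rw [MvPowerSeries.coeff_truncTotal _ hd, coeff_coe]
    have h := (abs_pdEval_le_iff hδ (⇑d) S x C₁).mp
      (hS d (by rw [← Finsupp.degree_eq_sum]; omega))
    rw [Finsupp.equivFunOnFinite_symm_coe, mul_assoc] at h
    refine le_trans (le_mul_of_one_le_left (by positivity) ?_) h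
    exact one_le_prod fun i _ => Nat.one_le_cast.mpr (Nat.factorial_pos _)
  · intro d hd
    rw [Set.Finite.mem_toFinset, Set.mem_ofPred_eq]
    by_contra! h
    exact mem_support_iff.mp hd (MvPowerSeries.coeff_truncTotal_eq_zero _ h)

lemma abs_pdEval_taylor_neg_le (hδ : 0 < δ) (x : Fin n → ℝ) {q : MvPolynomial (Fin n) ℝ}
    (hq₀ : |constantCoeff q| ≤ 1)
    (hq : ((m - 1).factorial : ℝ) * weightedNorm δ (q - C (constantCoeff q)) ≤ 1)
    (β : Fin n → ℕ) (hβ : (∑ i, β i) ≤ m - 1) :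
    |pdEval β (taylor (-x) q) x| ≤ δ ^ (-(∑ i, (β i : ℤ))) := by
  rw [← one_mul (δ ^ _), abs_pdEval_le_iff hδ, taylor_taylor_neg]
  set b := Finsupp.equivFunOnFinite.symm β
  by_cases hb : b = 0
  · have hβ0 : β = 0 := by
      rw [← Finsupp.coe_equivFunOnFinite_symm β]
      exact congrArg _ hb
    simpa [hβ0, hb, constantCoeff_eq] using hq₀
  have hcoeff : coeff b q = coeff b (q - C (constantCoeff q)) := by
    rw [coeff_sub, coeff_C, if_neg (Ne.symm hb), sub_zero]
  have hfact : (∏ i, ((β i).factorial : ℝ)) ≤ (m - 1).factorial := by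
    exact_mod_cast (Nat.le_of_dvd (Nat.factorial_pos _)
      (Nat.prod_factorial_dvd_factorial_sum _ _)).trans (Nat.factorial_le hβ)
  calc (∏ i, ((β i).factorial : ℝ)) * |coeff b q| * δ ^ b.degree
      = (∏ i, ((β i).factorial : ℝ)) * (|coeff b (q - C (constantCoeff q))| * δ ^ b.degree) := by
        rw [hcoeff, mul_assoc]
    _ ≤ (m - 1).factorial * weightedNorm δ (q - C (constantCoeff q)) :=
        mul_le_mul hfact (abs_coeff_mul_pow_le_weightedNorm hδ.le _ _) (by positivity)
          (by positivity)
    _ ≤ 1 := hq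

lemma exists_jetClass_partition (hm : 0 < m) {C₁ : ℝ} (hC₁ : 0 ≤ C₁) :
    ∃ ε > 0, ∀ (x : Fin n → ℝ) (δ : ℝ), 0 < δ → ∀ S : MvPolynomial (Fin n) ℝ,
      (∀ β : Fin n → ℕ, (∑ i, β i) ≤ m - 1 → |pdEval β S x| ≤ C₁ * δ ^ (-(∑ i, (β i : ℤ)))) →
      ∀ w : ℝ, |w| ≤ ε → ∃ Q₁ Q₂ : MvPolynomial (Fin n) ℝ,
        (∀ β : Fin n → ℕ, (∑ i, β i) ≤ m - 1 →
          |pdEval β Q₁ x| ≤ δ ^ (-(∑ i, (β i : ℤ))) ∧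
          |pdEval β Q₂ x| ≤ δ ^ (-(∑ i, (β i : ℤ)))) ∧
        jetClass m x Q₁ ^ 2 + jetClass m x Q₂ ^ 2 = 1 ∧
        jetClass m x Q₁ ^ 2 - jetClass m x Q₂ ^ 2 = w • jetClass m x S := by
  set A := ((Finsupp.finite_of_degree_lt (σ := Fin n) m).toFinset.card : ℝ) * C₁
  set K := ∑ k ∈ range m, |Ring.choose (1 / 2 : ℝ) k|
  set F := ((m - 1).factorial : ℝ)
  have hKF : 0 ≤ K * F := by positivity
  refine ⟨1 / (4 * (K * F + 1) * A + 1), by positivity, fun x δ hδ S hS w hw => ?_⟩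
  set S₁ := MvPowerSeries.truncTotal m (taylor x S : MvPowerSeries (Fin n) ℝ)
  have hwS : 4 * (K * F + 1) * (|w| * weightedNorm δ S₁) ≤ 1 := by
    rw [le_div_iff₀ (by positivity)] at hw
    calc _ ≤ 4 * (K * F + 1) * (|w| * A) := by
          gcongr
          exact weightedNorm_truncTotal_taylor_le hδ hS
      _ ≤ 1 := by nlinarith [abs_nonneg w]
  have hwS₀ : 0 ≤ |w| * weightedNorm δ S₁ :=
    mul_nonneg (abs_nonneg w) (weightedNorm_nonneg hδ.le _)
  have hbound {q : MvPolynomial (Fin n) ℝ}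
      (hq : weightedNorm δ (q - C (constantCoeff q)) ≤ 4 * K * (|w| * weightedNorm δ S₁)) :
      F * weightedNorm δ (q - C (constantCoeff q)) ≤ 1 := by
    calc F * weightedNorm δ (q - C (constantCoeff q))
        ≤ F * (4 * K * (|w| * weightedNorm δ S₁)) := by gcongr
      _ ≤ 4 * (K * F + 1) * (|w| * weightedNorm δ S₁) := by nlinarith
      _ ≤ 1 := hwS
  obtain ⟨q₁, hq₁, hq₁₀, hq₁₁⟩ :=
    exists_jetSqrt_half_one_add_smul hm hδ.le (S := S₁) (w := w) (by nlinarith)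
  obtain ⟨q₂, hq₂, hq₂₀, hq₂₁⟩ :=
    exists_jetSqrt_half_one_add_smul hm hδ.le (S := S₁) (w := -w) (by rw [abs_neg]; nlinarith)
  rw [abs_neg] at hq₂₁
  refine ⟨taylor (-x) q₁, taylor (-x) q₂, fun β hβ =>
    ⟨abs_pdEval_taylor_neg_le hδ x hq₁₀ (hbound hq₁₁) β hβ,
      abs_pdEval_taylor_neg_le hδ x hq₂₀ (hbound hq₂₁) β hβ⟩, ?_, ?_⟩ <;>
  rw [jetClass_taylor_neg_sq hq₁, jetClass_taylor_neg_sq hq₂] <;> module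

end Partition

lemma add_div_smul_odot_mem {m n : ℕ} (hm : 0 < m) {E : Set (Fin n → ℝ)}
    {Γ : (Fin n → ℝ) → ℝ → Set (MvPolynomial (Fin n) ℝ)} {Cw C₁ δmax δ M₀ w : ℝ}
    (hSF : ShapeField m n E Γ) (hW : WConvex m n E Γ Cw δmax) {x₀ : Fin n → ℝ} (hx₀ : x₀ ∈ E)
    (hC₁ : 0 < C₁) (hM₀ : 0 < M₀) (hδ : 0 < δ) (hδle : δ ≤ δmax)
    {P₀ Phat S Q₁ Q₂ : MvPolynomial (Fin n) ℝ}
    (hP₁ : P₀ + (1 / C₁) • Phat ∈ Γ x₀ (C₁ * M₀)) (hP₂ : P₀ - (1 / C₁) • Phat ∈ Γ x₀ (C₁ * M₀))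
    (hPhat : ∀ β : Fin n → ℕ, (∑ i, β i) ≤ m - 1 →
      |pdEval β Phat x₀| ≤ C₁ * M₀ * δ ^ (m - ∑ i, β i))
    (hQ : ∀ β : Fin n → ℕ, (∑ i, β i) ≤ m - 1 →
      |pdEval β Q₁ x₀| ≤ δ ^ (-(∑ i, (β i : ℤ))) ∧ |pdEval β Q₂ x₀| ≤ δ ^ (-(∑ i, (β i : ℤ))))
    (hsum : jetClass m x₀ Q₁ ^ 2 + jetClass m x₀ Q₂ ^ 2 = 1)
    (hdiff : jetClass m x₀ Q₁ ^ 2 - jetClass m x₀ Q₂ ^ 2 = w • jetClass m x₀ S) :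
    P₀ + (w / C₁) • odot m x₀ S Phat ∈ Γ x₀ (Cw * ((C₁ + 2) * M₀)) := by
  obtain ⟨-, hdeg, hmono⟩ := hSF x₀ hx₀ ((C₁ + 2) * M₀) (by positivity)
  have hP₁' := hmono _ (by positivity) (by nlinarith) hP₁
  have hP₂' := hmono _ (by positivity) (by nlinarith) hP₂
  have hP₁₂ (β : Fin n → ℕ) (hβ : (∑ i, β i) ≤ m - 1) :
      |pdEval β ((P₀ + (1 / C₁) • Phat) - (P₀ - (1 / C₁) • Phat)) x₀|
        ≤ (C₁ + 2) * M₀ * δ ^ (m - ∑ i, β i) := by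
    rw [show (P₀ + (1 / C₁) • Phat) - (P₀ - (1 / C₁) • Phat) = (2 / C₁) • Phat by module,
      pdEval_smul, abs_mul, abs_of_pos (by positivity)]
    calc 2 / C₁ * |pdEval β Phat x₀| ≤ 2 / C₁ * (C₁ * M₀ * δ ^ (m - ∑ i, β i)) := by
          gcongr
          exact hPhat β hβ
      _ ≤ (C₁ + 2) * M₀ * δ ^ (m - ∑ i, β i) := by
          rw [← mul_assoc, ← mul_assoc, div_mul_cancel₀ _ hC₁.ne']
          gcongr
          linarith
  have hmem := hW δ hδ hδle x₀ hx₀ _ (by positivity) _ _ Q₁ Q₂ hP₁' hP₂' hP₁₂ hQ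
    (odot_self_add_odot_self_eq_one hm x₀ hsum)
  rwa [odot_odot_add_odot_odot hm x₀ (hdeg _ hP₁') (hdeg _ hP₂') hsum hdiff, one_div_mul_eq_div]
    at hmem

theorem shape_field_multiply_basis_element_general (m n : ℕ) (hm : 0 < m)
    (Cw C₁ : ℝ) (hCw : 0 < Cw) (hC₁ : 0 < C₁) :
    ∃ C₂ : ℝ, 0 < C₂ ∧
      ∀ (E : Set (Fin n → ℝ)), E.Finite →
      ∀ (Γ : (Fin n → ℝ) → ℝ → Set (MvPolynomial (Fin n) ℝ)) (δmax : ℝ), 0 < δmax →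
        ShapeField m n E Γ → WConvex m n E Γ Cw δmax →
        ∀ x₀ ∈ E, ∀ M₀ : ℝ, 0 < M₀ → ∀ δ : ℝ, 0 < δ → δ ≤ δmax →
          ∀ P₀ Phat Shat : MvPolynomial (Fin n) ℝ,
            P₀ + (1 / C₁) • Phat ∈ Γ x₀ (C₁ * M₀) →
            P₀ - (1 / C₁) • Phat ∈ Γ x₀ (C₁ * M₀) →
            (∀ β : Fin n → ℕ, (∑ i, β i) ≤ m - 1 →
              |pdEval β Phat x₀| ≤ C₁ * M₀ * δ ^ (m - ∑ i, β i)) →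
            (∀ β : Fin n → ℕ, (∑ i, β i) ≤ m - 1 →
              |pdEval β Shat x₀| ≤ C₁ * δ ^ (-(∑ i, (β i : ℤ)))) →
            P₀ + (1 / C₂) • odot m x₀ Shat Phat ∈ Γ x₀ (C₂ * M₀) ∧
            P₀ - (1 / C₂) • odot m x₀ Shat Phat ∈ Γ x₀ (C₂ * M₀) := by
  obtain ⟨ε, hε, hpartition⟩ := exists_jetClass_partition (n := n) hm hC₁.le
  set C₂ := C₁ / ε + Cw * (C₁ + 2) with hC₂
  have hεC₂ : C₁ ≤ ε * C₂ := by
    rw [hC₂, mul_add, mul_div_cancel₀ C₁ hε.ne']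
    linarith [mul_pos hε (mul_pos hCw (by linarith : 0 < C₁ + 2))]
  refine ⟨C₂, by positivity, ?_⟩
  intro E _ Γ δmax _ hSF hW x₀ hx₀ M₀ hM₀ δ hδ hδle P₀ Phat Shat hP₁ hP₂ hPhat hShat
  have key (t : ℝ) (ht : |t| = 1) : P₀ + (t / C₂) • odot m x₀ Shat Phat ∈ Γ x₀ (C₂ * M₀) := by
    obtain ⟨Q₁, Q₂, hQ, hsum, hdiff⟩ := hpartition x₀ δ hδ Shat hShat (t * C₁ / C₂) (by
      rw [abs_div, abs_mul, ht, one_mul, abs_of_pos hC₁, abs_of_pos (by positivity),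
        div_le_iff₀ (by positivity)]
      exact hεC₂)
    have hmem := add_div_smul_odot_mem hm hSF hW hx₀ hC₁ hM₀ hδ hδle hP₁ hP₂ hPhat hQ hsum hdiff
    rw [show t * C₁ / C₂ / C₁ = t / C₂ by field_simp] at hmem
    exact (hSF x₀ hx₀ (C₂ * M₀) (by positivity)).2.2 _ (by positivity)
      (by nlinarith [div_pos hC₁ hε]) hmem
  constructor
  · simpa using key 1 (by simp)
  · simpa [sub_eq_add_neg, neg_div] using key (-1) (by simp)

/-- Lemma 3.1: if `P⁰ ± (1/C₁) P̂ ∈ Γ(x₀, C₁ M₀)`, `|∂^β P̂(x₀)| ≤ C₁ M₀ δ^{m-|β|}`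
and `|∂^β Ŝ(x₀)| ≤ C₁ δ^{-|β|}` for `|β| ≤ m-1`, then
`P⁰ ± (1/C₂)(Ŝ ⊙_{x₀} P̂) ∈ Γ(x₀, C₂ M₀)` with `C₂` determined by `C₁`, `C_w`, `m`, `n`. -/
theorem shape_field_multiply_basis_element (m n : ℕ) (hm : 0 < m) (hn : 0 < n)
    (Cw C₁ : ℝ) (hCw : 0 < Cw) (hC₁ : 0 < C₁) :
    ∃ C₂ : ℝ, 0 < C₂ ∧
      ∀ (E : Set (Fin n → ℝ)), E.Finite →
      ∀ (Γ : (Fin n → ℝ) → ℝ → Set (MvPolynomial (Fin n) ℝ)) (δmax : ℝ), 0 < δmax →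
        ShapeField m n E Γ → WConvex m n E Γ Cw δmax →
        ∀ x₀ ∈ E, ∀ M₀ : ℝ, 0 < M₀ → ∀ δ : ℝ, 0 < δ → δ ≤ δmax →
          ∀ P₀ Phat Shat : MvPolynomial (Fin n) ℝ,
            P₀ + (1 / C₁) • Phat ∈ Γ x₀ (C₁ * M₀) →
            P₀ - (1 / C₁) • Phat ∈ Γ x₀ (C₁ * M₀) →
            (∀ β : Fin n → ℕ, (∑ i, β i) ≤ m - 1 →
              |pdEval β Phat x₀| ≤ C₁ * M₀ * δ ^ (m - ∑ i, β i)) →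
            (∀ β : Fin n → ℕ, (∑ i, β i) ≤ m - 1 →
              |pdEval β Shat x₀| ≤ C₁ * δ ^ (-(∑ i, (β i : ℤ)))) →
            P₀ + (1 / C₂) • odot m x₀ Shat Phat ∈ Γ x₀ (C₂ * M₀) ∧
            P₀ - (1 / C₂) • odot m x₀ Shat Phat ∈ Γ x₀ (C₂ * M₀) :=
  shape_field_multiply_basis_element_general m n hm Cw C₁ hCw hC₁

end
end
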